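/- (Disturbance-only gain scaling.) Fix d ∈ (−1,1), β > 0 and α₁, α₂, ã > 0. For L > 0 define S_ν(L) := {γ ∈ ℝ : γ > 0 and Ĵ(z₁,z₂,0,δ; γ, L) < 0 for all (z₁,z₂,δ) ∈ ℝ³∖{(0,0,0)}}. Then for every L > 0 and γ > 0: γ ∈ S_ν(L) ⟺ γ·L^{(1−d)/(1+d)} ∈ S_ν(1); consequently inf S_ν(L) = L^{−(1−d)/(1+d)} · inf S_ν(1). (If no noise is present, the estimated homogeneous L₂-gain is inversely proportional to the power (1−d)/(1+d) of the gain-scaling L.) -/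

import Mathlib

/-!
With `ν = 0`, `Ĵ` depends on the gain-scaling `L` only through `δ / L²` and the penalty
`(γ / L)² |δ|^{2/(1+d)}`. The substitution `δ ↦ δ / L²`, a bijection of the nonzero triples,
therefore turns `Ĵ(·; γ, L)` into `Ĵ(·; γ L^{(1-d)/(1+d)}, 1)`, so `S_ν(L)` is the image of
`S_ν(1)` under multiplication by `L^{-(1-d)/(1+d)}`.
-/

open Pointwise

/-- Sign-preserving power `⌊x⌉^p = sign(x)·|x|^p`. -/
noncomputable def spow (x p : ℝ) : ℝ := Real.sign x * |x| ^ p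

/-- The value function `Ĵ(z₁,z₂,ν,δ; γ, L)` of the homogeneous differential
dissipation inequality for the second-order homogeneous differentiator. -/
noncomputable def Jhat (d β α1 α2 a L γ z1 z2 ν δ : ℝ) : ℝ :=
  a * (-α1 * (spow z1 (1/(1-d)) - z2) * (spow (z1 + ν) (1/(1-d)) - z2)
        + (-z1 + (1 + β) * spow z2 (1 - d)) *
            (-(α2 / α1) * spow (z1 + ν) ((1+d)/(1-d)) + δ / (L ^ 2 * α1)))
    + α1 ^ 2 * z2 ^ 2 - (γ / L) ^ 2 * (|ν| ^ (2/(1-d)) + |δ| ^ (2/(1+d)))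

/-- The set of certified gains in the disturbance-only case (`ν ≡ 0`). -/
def Snu (d β α1 α2 a L : ℝ) : Set ℝ :=
  {γ : ℝ | 0 < γ ∧ ∀ z1 z2 δ : ℝ, (z1, z2, δ) ≠ ((0:ℝ), (0:ℝ), (0:ℝ)) →
    Jhat d β α1 α2 a L γ z1 z2 0 δ < 0}

lemma rpow_sq_mul_sq_eq {d L : ℝ} (hd : 1 + d ≠ 0) (hL : 0 < L) :
    (L ^ ((1 - d) / (1 + d))) ^ 2 * L ^ 2 = (L ^ 2) ^ (2 / (1 + d)) := by
  rw [← Real.rpow_mul_natCast hL.le, ← Real.rpow_natCast L 2, ← Real.rpow_mul hL.le,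
    ← Real.rpow_add hL]
  congr 1
  field_simp
  ring

lemma sq_div_mul_abs_rpow_eq {d L : ℝ} (hd : 1 + d ≠ 0) (hL : 0 < L) (γ δ : ℝ) :
    (γ / L) ^ 2 * |δ| ^ (2 / (1 + d))
      = (γ * L ^ ((1 - d) / (1 + d))) ^ 2 * |δ / L ^ 2| ^ (2 / (1 + d)) := by
  have hL2 : 0 < L ^ 2 := by positivity
  rw [abs_div, abs_of_pos hL2, Real.div_rpow (abs_nonneg δ) hL2.le, mul_pow,
    ← rpow_sq_mul_sq_eq hd hL]
  field_simp

lemma Jhat_zero_eq_Jhat_one {d L : ℝ} (hd₁ : 1 - d ≠ 0) (hd₂ : 1 + d ≠ 0) (hL : 0 < L)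
    (β α1 α2 a γ z1 z2 δ : ℝ) :
    Jhat d β α1 α2 a L γ z1 z2 0 δ
      = Jhat d β α1 α2 a 1 (γ * L ^ ((1 - d) / (1 + d))) z1 z2 0 (δ / L ^ 2) := by
  have hν : |(0 : ℝ)| ^ (2 / (1 - d)) = 0 := by
    rw [abs_zero, Real.zero_rpow (div_ne_zero two_ne_zero hd₁)]
  simp only [Jhat, add_zero, hν, zero_add, sq_div_mul_abs_rpow_eq hd₂ hL γ δ]
  ring

lemma forall_ne_zero_div_iff {P : ℝ → ℝ → ℝ → Prop} {c : ℝ} (hc : c ≠ 0) :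
    (∀ z1 z2 δ : ℝ, (z1, z2, δ) ≠ ((0:ℝ), (0:ℝ), (0:ℝ)) → P z1 z2 (δ / c)) ↔
      ∀ z1 z2 δ : ℝ, (z1, z2, δ) ≠ ((0:ℝ), (0:ℝ), (0:ℝ)) → P z1 z2 δ := by
  constructor
  · intro h z1 z2 δ hne
    simpa [hc] using h z1 z2 (δ * c) (by simpa [hc] using hne)
  · intro h z1 z2 δ hne
    exact h z1 z2 (δ / c) (by simpa [hc] using hne)

lemma mem_Snu_iff {d L : ℝ} (hd₁ : 1 - d ≠ 0) (hd₂ : 1 + d ≠ 0) (hL : 0 < L)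
    (β α1 α2 a γ : ℝ) :
    γ ∈ Snu d β α1 α2 a L ↔ γ * L ^ ((1 - d) / (1 + d)) ∈ Snu d β α1 α2 a 1 := by
  simp only [Snu, Set.mem_ofPred_eq, Jhat_zero_eq_Jhat_one hd₁ hd₂ hL,
    mul_pos_iff_of_pos_right (Real.rpow_pos_of_pos hL _)]
  exact and_congr_right' (forall_ne_zero_div_iff (pow_ne_zero 2 hL.ne')
    (P := fun z1 z2 δ => Jhat d β α1 α2 a 1 (γ * L ^ ((1 - d) / (1 + d))) z1 z2 0 δ < 0))

lemma Snu_eq_rpow_smul_Snu_one {d L : ℝ} (hd₁ : 1 - d ≠ 0) (hd₂ : 1 + d ≠ 0) (hL : 0 < L)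
    (β α1 α2 a : ℝ) :
    Snu d β α1 α2 a L = L ^ (-(1 - d) / (1 + d)) • Snu d β α1 α2 a 1 := by
  ext γ
  rw [neg_div, Real.rpow_neg hL.le,
    Set.mem_smul_set_iff_inv_smul_mem₀ (inv_ne_zero (Real.rpow_pos_of_pos hL _).ne'),
    inv_inv, smul_eq_mul, mul_comm]
  exact mem_Snu_iff hd₁ hd₂ hL β α1 α2 a γ

theorem stmt16_general (d β α1 α2 a : ℝ) (hd : d ∈ Set.Ioo (-1:ℝ) 1) :
    (∀ L > (0:ℝ), ∀ γ > (0:ℝ),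
      (γ ∈ Snu d β α1 α2 a L ↔ γ * L ^ ((1-d)/(1+d)) ∈ Snu d β α1 α2 a 1)) ∧
    (∀ L > (0:ℝ),
      sInf (Snu d β α1 α2 a L) = L ^ (-(1-d)/(1+d)) * sInf (Snu d β α1 α2 a 1)) := by
  have hd₁ : 1 - d ≠ 0 := by linarith [hd.2]
  have hd₂ : 1 + d ≠ 0 := by linarith [hd.1]
  refine ⟨fun L hL γ _ => mem_Snu_iff hd₁ hd₂ hL β α1 α2 a γ, fun L hL => ?_⟩
  rw [Snu_eq_rpow_smul_Snu_one hd₁ hd₂ hL,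
    Real.sInf_smul_of_nonneg (Real.rpow_nonneg hL.le _), smul_eq_mul]

/-- Disturbance-only gain scaling: `γ ∈ S_ν(L) ↔ γ·L^{(1-d)/(1+d)} ∈ S_ν(1)`, hence
the estimated homogeneous `L₂`-gain is inversely proportional to a power of the
gain-scaling: `inf S_ν(L) = L^{-(1-d)/(1+d)} · inf S_ν(1)`. -/
theorem stmt16 (d β α1 α2 a : ℝ) (hd : d ∈ Set.Ioo (-1:ℝ) 1) (hβ : 0 < β)
    (hα1 : 0 < α1) (hα2 : 0 < α2) (ha : 0 < a) :
    (∀ L > (0:ℝ), ∀ γ > (0:ℝ),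
      (γ ∈ Snu d β α1 α2 a L ↔ γ * L ^ ((1-d)/(1+d)) ∈ Snu d β α1 α2 a 1)) ∧
    (∀ L > (0:ℝ),
      sInf (Snu d β α1 α2 a L) = L ^ (-(1-d)/(1+d)) * sInf (Snu d β α1 α2 a 1)) :=
  stmt16_general d β α1 α2 a hd
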